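/- arXiv:0809.4337 — 2 statements merged into one kernel-verified Lean document; each statement's English description precedes it below -/
import Mathlib

section
/- Let A = K[L][x_{v_k,w_k}^{−1}] and B = K[L'][x_{v_{k−1}+1,w_k},…,x_{v_k−1,w_k}, x_{v_k,w_k}, x_{v_k,w_k}^{−1}, x_{v_k,w_k−1},…,x_{v_k,w_{k+1}+1}] (so A and B are localizations at x_{v_k,w_k} of polynomial rings in the same set of variables). Define the K-algebra homomorphism φ: A → B by φ(x_{ij}) = x_{ij} + x_{i,w_k}·x_{v_k,j}·x_{v_k,w_k}^{−1} if i ≠ v_k, j ≠ w_k and (i,j) ∈ 𝓛⁺ with i ≤ v_k, j ≤ w_k, and φ(x_{ij}) = x_{ij} otherwise; and define ψ: B → A by ψ(x_{ij}) = x_{ij} − x_{i,w_k}·x_{v_k,j}·x_{v_k,w_k}^{−1} if i ≠ v_k, j ≠ w_k and (i,j) ∈ 𝓛'⁺ with i ≤ v_k − 1, j ≤ w_k − 1, and ψ(x_{ij}) = x_{ij} otherwise. Then φ and ψ are mutually inverse K-algebra isomorphisms. -/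
open MvPolynomial

/-- A symmetric ladder inside the `n × n` grid `{1,…,n} × {1,…,n}`. -/
def IsLadder (n : ℕ) (Λ : Set (ℕ × ℕ)) : Prop :=
  (∀ p ∈ Λ, 1 ≤ p.1 ∧ p.1 ≤ n ∧ 1 ≤ p.2 ∧ p.2 ≤ n) ∧
  (∀ p ∈ Λ, (p.2, p.1) ∈ Λ) ∧
  (∀ i j h k : ℕ, i < h → k < j → (i, j) ∈ Λ → (h, k) ∈ Λ →
    (i, k) ∈ Λ ∧ (i, h) ∈ Λ ∧ (h, j) ∈ Λ ∧ (j, k) ∈ Λ)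

/-- `𝓛⁺`, the part of the ladder on or above the diagonal. -/
def ladderPlus (Λ : Set (ℕ × ℕ)) : Set (ℕ × ℕ) := {p ∈ Λ | p.1 ≤ p.2}

/-- The variable of `MvPolynomial ↥σ K` attached to a position `p` (or `0` if `p ∉ σ`). -/
noncomputable def xvar (K : Type*) [Field K] (σ : Set (ℕ × ℕ)) (p : ℕ × ℕ) :
    MvPolynomial ↥σ K :=
  letI := Classical.dec (p ∈ σ)
  if h : p ∈ σ then X ⟨p, h⟩ else 0

/-- The `(i,j)` entry of the generic symmetric matrix, as an element of `K[L]`: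
the variable attached to the sorted pair. -/
noncomputable def ladderEntry (K : Type*) [Field K] (Λ : Set (ℕ × ℕ)) (i j : ℕ) :
    MvPolynomial ↥(ladderPlus Λ) K := xvar K (ladderPlus Λ) (min i j, max i j)

/-- `I_t(S)`: the ideal of `K[L]` generated by the `t × t` minors of the generic
symmetric matrix all of whose entries lie in the set of positions `S`
(positions are recorded as sorted pairs). -/
noncomputable def minorIdeal (K : Type*) [Field K] (Λ : Set (ℕ × ℕ)) (S : Set (ℕ × ℕ))
    (t : ℕ) : Ideal (MvPolynomial ↥(ladderPlus Λ) K) :=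
  Ideal.span { f | ∃ α β : Fin t → ℕ, StrictMono α ∧ StrictMono β ∧
    (∀ p q, (min (α p) (β q), max (α p) (β q)) ∈ S) ∧
    f = (Matrix.of fun p q => ladderEntry K Λ (α p) (β q)).det }

/-- The region `T⁺_{(c,d)} = {(i,j) ∈ T⁺ : i ≤ c, j ≤ d}` of a (symmetric) ladder `T`. -/
def region (T : Set (ℕ × ℕ)) (c d : ℕ) : Set (ℕ × ℕ) :=
  {p ∈ ladderPlus T | p.1 ≤ c ∧ p.2 ≤ d}

/-- The symmetric mixed ladder determinantal ideal
`I_t(L) = I_{t 1}(L_{(v 1, w 1)}) + … + I_{t s}(L_{(v s, w s)}) ⊆ K[L]`. -/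
noncomputable def mixedLadderIdeal (K : Type*) [Field K] (Λ : Set (ℕ × ℕ)) (s : ℕ)
    (v w t : ℕ → ℕ) : Ideal (MvPolynomial ↥(ladderPlus Λ) K) :=
  ∑ k ∈ Finset.Icc 1 s, minorIdeal K Λ (region Λ (v k) (w k)) (t k)

/-- The data of distinguished points `(v 1, w 1),…,(v s, w s)`: points of the upper
border of `𝓛⁺` containing all upper outside corners, with `v` increasing and `w`
decreasing. -/
def DistinguishedPoints (Λ : Set (ℕ × ℕ)) (s : ℕ) (v w : ℕ → ℕ) : Prop :=
  1 ≤ s ∧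
  (∀ k, 1 ≤ k → k ≤ s → (v k, w k) ∈ ladderPlus Λ ∧ (v k + 1, w k + 1) ∉ ladderPlus Λ) ∧
  (∀ c d : ℕ, (c, d) ∈ ladderPlus Λ → (c + 1, d + 1) ∉ ladderPlus Λ →
    (c + 1, d) ∉ Λ → (c, d + 1) ∉ Λ → ∃ k, 1 ≤ k ∧ k ≤ s ∧ v k = c ∧ w k = d) ∧
  (∀ k l, 1 ≤ k → k ≤ l → l ≤ s → v k ≤ v l ∧ w l ≤ w k)

/-- The entries removed from `𝓛` in the biliaison step at the distinguished point
`(v k, w k)`: the entries `(v (k-1) + 1, w k),…,(v k, w k),(v k, w k - 1),…,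
(v k, w (k+1) + 1)` together with their transposes. -/
def removedSet (v w : ℕ → ℕ) (k : ℕ) : Set (ℕ × ℕ) :=
  {p | (p.2 = w k ∧ v (k - 1) + 1 ≤ p.1 ∧ p.1 ≤ v k) ∨
       (p.1 = v k ∧ w (k + 1) + 1 ≤ p.2 ∧ p.2 ≤ w k) ∨
       (p.1 = w k ∧ v (k - 1) + 1 ≤ p.2 ∧ p.2 ≤ v k) ∨
       (p.2 = v k ∧ w (k + 1) + 1 ≤ p.1 ∧ p.1 ≤ w k)}

/-- The ladder `𝓛'` obtained from `𝓛` by removing the entries of `removedSet`. -/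
def ladderPrime (Λ : Set (ℕ × ℕ)) (v w : ℕ → ℕ) (k : ℕ) : Set (ℕ × ℕ) :=
  Λ \ removedSet v w k

/-- The ladder `𝓙` obtained from `𝓛` by removing the single entry `(v k, w k)`
and its transpose. -/
def ladderJ (Λ : Set (ℕ × ℕ)) (v w : ℕ → ℕ) (k : ℕ) : Set (ℕ × ℕ) :=
  Λ \ {(v k, w k), (w k, v k)}

/-- The ideal `I_{t'}(L')` of the ladder `𝓛'` with distinguished points
`(v 1, w 1),…,(v (k-1), w (k-1)),(v k - 1, w k - 1),(v (k+1), w (k+1)),…,(v s, w s)`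
and sizes `t' = (t 1,…,t (k-1), t k - 1, t (k+1),…,t s)`, extended to `K[L]`. -/
noncomputable def primedIdeal (K : Type*) [Field K] (Λ : Set (ℕ × ℕ)) (s : ℕ)
    (v w t : ℕ → ℕ) (k : ℕ) : Ideal (MvPolynomial ↥(ladderPlus Λ) K) :=
  (∑ l ∈ (Finset.Icc 1 s).erase k,
    minorIdeal K Λ (region (ladderPrime Λ v w k) (v l) (w l)) (t l)) +
  minorIdeal K Λ (region (ladderPrime Λ v w k) (v k - 1) (w k - 1)) (t k - 1)

/-- The ideal `I_{t'}(L')`, as an ideal of `K[L']`. -/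
noncomputable def primedIdealSelf (K : Type*) [Field K] (Λ : Set (ℕ × ℕ)) (s : ℕ)
    (v w t : ℕ → ℕ) (k : ℕ) :
    Ideal (MvPolynomial ↥(ladderPlus (ladderPrime Λ v w k)) K) :=
  (∑ l ∈ (Finset.Icc 1 s).erase k,
    minorIdeal K (ladderPrime Λ v w k)
      (region (ladderPrime Λ v w k) (v l) (w l)) (t l)) +
  minorIdeal K (ladderPrime Λ v w k)
    (region (ladderPrime Λ v w k) (v k - 1) (w k - 1)) (t k - 1)

/-- The ideal `I_u(J) = I_{t 1}(L_1)+…+I_{t (k-1)}(L_(k-1)) + I_{t k}(J_{(v k - 1, w k)})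
+ I_{t k}(J_{(v k, w k - 1)}) + I_{t (k+1)}(L_(k+1))+…+I_{t s}(L_s) ⊆ K[L]`,
generated by the minors generating `I_t(L)` that do not involve `x_{v k, w k}`. -/
noncomputable def linkIdeal (K : Type*) [Field K] (Λ : Set (ℕ × ℕ)) (s : ℕ)
    (v w t : ℕ → ℕ) (k : ℕ) : Ideal (MvPolynomial ↥(ladderPlus Λ) K) :=
  (∑ l ∈ (Finset.Icc 1 s).erase k,
    minorIdeal K Λ (region Λ (v l) (w l)) (t l)) +
  minorIdeal K Λ (region (ladderJ Λ v w k) (v k - 1) (w k)) (t k) +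
  minorIdeal K Λ (region (ladderJ Λ v w k) (v k) (w k - 1)) (t k)

/-- The variable of a polynomial ring (over any coefficient ring) attached to a
position `p`, or `0` if `p` is not an allowed position. -/
noncomputable def pvar (R : Type*) [CommRing R] (σ : Set (ℕ × ℕ)) (p : ℕ × ℕ) :
    MvPolynomial ↥σ R :=
  letI := Classical.dec (p ∈ σ)
  if h : p ∈ σ then MvPolynomial.X ⟨p, h⟩ else 0

/-!
The hypotheses force the distinguished point `(v k, w k)` onto the diagonal: the last diagonal
entry of a symmetric ladder is an upper outside corner, hence some `(v l, w l)`, and the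
monotonicity of `v` and `w` leaves only `l = k`. With `c := v k = w k`, every correction term
`x_{i c} x_{c j} / x_{c c}` is a product of variables in column `c` (as sorted pairs) and of
`x_{c c}⁻¹`, none of which is moved by `φ` or `ψ`, since these only change variables `x_{i j}`
with `j < c`. So `φ` and `ψ` are the translations `x ↦ x + g` and `x ↦ x - g` by one `g` that
both fix, hence mutually inverse; on `𝓛⁺` the conditions defining `φ` and `ψ` select the same
entries.
-/

namespace MvPolynomial

variable {R σ : Type*} [CommRing R] (e : σ)

noncomputable def awayTranslate (g : σ → Localization.Away (X e : MvPolynomial σ R))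
    (hg : g e = 0) :
    Localization.Away (X e : MvPolynomial σ R) →ₐ[R] Localization.Away (X e : MvPolynomial σ R) :=
  IsLocalization.Away.liftAlgHom (X e)
    (f := aeval fun q => algebraMap (MvPolynomial σ R) _ (X q) + g q)
    (by simpa [hg] using IsLocalization.Away.algebraMap_isUnit (X e))

variable {e} {g : σ → Localization.Away (X e : MvPolynomial σ R)} {hg : g e = 0}

theorem awayTranslate_algebraMap_X (q : σ) :
    awayTranslate e g hg (algebraMap (MvPolynomial σ R) _ (X q)) =
      algebraMap (MvPolynomial σ R) _ (X q) + g q := by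
  simp [awayTranslate, IsLocalization.Away.liftAlgHom_apply]

theorem awayTranslate_algebraMap_X_of_eq_zero {q : σ} (hq : g q = 0) :
    awayTranslate e g hg (algebraMap (MvPolynomial σ R) _ (X q)) =
      algebraMap (MvPolynomial σ R) _ (X q) := by
  rw [awayTranslate_algebraMap_X, hq, add_zero]

theorem awayTranslate_invSelf :
    awayTranslate e g hg (IsLocalization.Away.invSelf (X e : MvPolynomial σ R)) =
      IsLocalization.Away.invSelf (X e : MvPolynomial σ R) := by
  refine left_inv_eq_right_inv (a := algebraMap (MvPolynomial σ R) _ (X e)) ?_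
    (IsLocalization.Away.mul_invSelf _)
  rw [← awayTranslate_algebraMap_X_of_eq_zero (hg := hg) hg, ← map_mul, mul_comm,
    IsLocalization.Away.mul_invSelf, map_one]

theorem awayTranslate_comp_eq_id {g' : σ → Localization.Away (X e : MvPolynomial σ R)}
    {hg' : g' e = 0} (hsum : ∀ q, g q + g' q = 0)
    (hfix : ∀ q, awayTranslate e g' hg' (g q) = g q) :
    (awayTranslate e g' hg').comp (awayTranslate e g hg) = AlgHom.id R _ := by
  refine IsLocalization.algHom_ext (Submonoid.powers (X e)) (algHom_ext fun q => ?_)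
  change awayTranslate e g' hg' (awayTranslate e g hg (algebraMap (MvPolynomial σ R) _ (X q))) =
    algebraMap (MvPolynomial σ R) _ (X q)
  rw [awayTranslate_algebraMap_X, map_add, awayTranslate_algebraMap_X, hfix, add_assoc,
    add_comm (g' q), hsum, add_zero]

end MvPolynomial

theorem IsLadder.diag_mem_of_lt {n : ℕ} {Λ : Set (ℕ × ℕ)} (hΛ : IsLadder n Λ) {i j : ℕ}
    (hij : i < j) (h : (i, j) ∈ Λ) : (j, j) ∈ Λ :=
  (hΛ.2.2 i j j i hij hij h (hΛ.2.1 _ h)).2.2.1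

theorem IsLadder.exists_diag_corner {n : ℕ} {Λ : Set (ℕ × ℕ)} (hΛ : IsLadder n Λ) {a : ℕ}
    (ha : (a, a) ∈ Λ) :
    ∃ c, a ≤ c ∧ (c, c) ∈ Λ ∧ (c + 1, c + 1) ∉ Λ ∧ (c + 1, c) ∉ Λ ∧ (c, c + 1) ∉ Λ := by
  classical
  have han : a ≤ n := (hΛ.1 _ ha).2.1
  set c := Nat.findGreatest (fun c => (c, c) ∈ Λ) n
  have hc1 : (c + 1, c + 1) ∉ Λ := fun h =>
    Nat.findGreatest_is_greatest (lt_add_one c) (hΛ.1 _ h).2.1 h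
  have hc2 : (c, c + 1) ∉ Λ := fun h => hc1 (hΛ.diag_mem_of_lt (lt_add_one c) h)
  exact ⟨c, Nat.le_findGreatest han ha, Nat.findGreatest_spec (P := fun c => (c, c) ∈ Λ) han ha,
    hc1, fun h => hc2 (hΛ.2.1 _ h), hc2⟩

theorem DistinguishedPoints.fst_eq_snd {n s k : ℕ} {Λ : Set (ℕ × ℕ)} {v w : ℕ → ℕ}
    (hΛ : IsLadder n Λ) (hd : DistinguishedPoints Λ s v w) (hk1 : 1 ≤ k) (hks : k ≤ s)
    (hwk : w (k + 1) < w k) : v k = w k := by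
  obtain ⟨hmem, hle⟩ := (hd.2.1 k hk1 hks).1
  by_contra hne
  obtain ⟨c, hwc, hc, hc1, hc2, hc3⟩ :=
    hΛ.exists_diag_corner (hΛ.diag_mem_of_lt (lt_of_le_of_ne hle hne) hmem)
  obtain ⟨l, hl1, hls, hvl, hwl⟩ := hd.2.2.1 c c ⟨hc, le_rfl⟩ (fun h => hc1 h.1) hc2 hc3
  rcases le_or_gt l k with hlk | hkl
  · have := (hd.2.2.2 l k hl1 hlk hks).1
    omega
  · have := (hd.2.2.2 (k + 1) l (by omega) hkl hls).2
    omega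

theorem mem_ladderPlus_ladderPrime {Λ : Set (ℕ × ℕ)} {v w : ℕ → ℕ} {k : ℕ} {p : ℕ × ℕ}
    (hp : p ∈ ladderPlus Λ) (h1 : p.1 < min (v k) (w k)) (h2 : p.2 < min (v k) (w k)) :
    p ∈ ladderPlus (ladderPrime Λ v w k) := by
  refine ⟨⟨hp.1, ?_⟩, hp.2⟩
  simp only [removedSet, Set.mem_ofPred_eq, lt_min_iff] at h1 h2 ⊢
  omega

theorem corner_cond_iff_ladderPrime_cond {Λ : Set (ℕ × ℕ)} {v w : ℕ → ℕ} {k : ℕ}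
    {p : ℕ × ℕ} (hp : p ∈ ladderPlus Λ) (hvw : v k = w k) :
    (p.1 ≠ v k ∧ p.2 ≠ w k ∧ p.1 ≤ v k ∧ p.2 ≤ w k) ↔
      (p.1 ≠ v k ∧ p.2 ≠ w k ∧ p ∈ ladderPlus (ladderPrime Λ v w k) ∧
        p.1 ≤ v k - 1 ∧ p.2 ≤ w k - 1) := by
  refine ⟨fun ⟨h1, h2, h3, h4⟩ => ⟨h1, h2, ?_, by omega, by omega⟩, fun h => by omega⟩
  exact mem_ladderPlus_ladderPrime hp (by omega) (by omega)

section LadderEntries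

variable {K : Type*} [Field K] {Λ : Set (ℕ × ℕ)}

theorem ladderEntry_of_le {i j : ℕ} (hij : i ≤ j) :
    ladderEntry K Λ i j = xvar K (ladderPlus Λ) (i, j) := by
  rw [ladderEntry, min_eq_left hij, max_eq_right hij]

theorem xvar_of_mem {σ : Set (ℕ × ℕ)} {p : ℕ × ℕ} (hp : p ∈ σ) :
    xvar K σ p = X ⟨p, hp⟩ := by
  rw [xvar, dif_pos hp]

theorem awayTranslate_algebraMap_ladderEntry
    {e : ladderPlus Λ} {g : ladderPlus Λ → Localization.Away (X e : MvPolynomial _ K)}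
    {hg : g e = 0} {c i j : ℕ} (hgc : ∀ q : ladderPlus Λ, c ≤ q.1.2 → g q = 0)
    (hc : c ≤ max i j) :
    awayTranslate e g hg (algebraMap _ _ (ladderEntry K Λ i j)) =
      algebraMap _ _ (ladderEntry K Λ i j) := by
  rw [ladderEntry, xvar]
  split_ifs with h
  · exact awayTranslate_algebraMap_X_of_eq_zero (hgc _ hc)
  · simp

variable (K) in
noncomputable def shearTerm (e q : ladderPlus Λ) :
    Localization.Away (X e : MvPolynomial _ K) :=
  algebraMap _ _ (ladderEntry K Λ q.1.1 e.1.2 * ladderEntry K Λ e.1.1 q.1.2) *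
    IsLocalization.Away.invSelf (X e : MvPolynomial _ K)

theorem awayTranslate_shearTerm {e : ladderPlus Λ}
    (he : e.1.1 = e.1.2) {g : ladderPlus Λ → Localization.Away (X e : MvPolynomial _ K)}
    {hg : g e = 0} (hge : ∀ q : ladderPlus Λ, e.1.2 ≤ q.1.2 → g q = 0) (q : ladderPlus Λ) :
    awayTranslate e g hg (shearTerm K e q) = shearTerm K e q := by
  rw [shearTerm, map_mul, map_mul, map_mul, awayTranslate_invSelf,
    awayTranslate_algebraMap_ladderEntry hge (le_max_right _ _),
    awayTranslate_algebraMap_ladderEntry hge (le_max_of_le_left he.ge)]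

end LadderEntries

open scoped Classical in
theorem statement4_general {K : Type*} [Field K] (n : ℕ)
    (Λ : Set (ℕ × ℕ)) (hΛ : IsLadder n Λ)
    (s : ℕ) (v w : ℕ → ℕ) (hd : DistinguishedPoints Λ s v w)
    (k : ℕ) (hk1 : 1 ≤ k) (hks : k ≤ s)
    (hwk : w (k + 1) < w k) :
    ∃ (φ ψ : Localization.Away (ladderEntry K Λ (v k) (w k)) →ₐ[K]
        Localization.Away (ladderEntry K Λ (v k) (w k))),
      (∀ (p : ℕ × ℕ) (hp : p ∈ ladderPlus Λ),
        φ (algebraMap (MvPolynomial ↥(ladderPlus Λ) K) _ (MvPolynomial.X ⟨p, hp⟩)) =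
          if p.1 ≠ v k ∧ p.2 ≠ w k ∧ p.1 ≤ v k ∧ p.2 ≤ w k then
            algebraMap (MvPolynomial ↥(ladderPlus Λ) K) _ (MvPolynomial.X ⟨p, hp⟩) +
              algebraMap (MvPolynomial ↥(ladderPlus Λ) K) _
                  (ladderEntry K Λ p.1 (w k) * ladderEntry K Λ (v k) p.2) *
                IsLocalization.Away.invSelf (ladderEntry K Λ (v k) (w k))
          else
            algebraMap (MvPolynomial ↥(ladderPlus Λ) K) _ (MvPolynomial.X ⟨p, hp⟩)) ∧
      (∀ (p : ℕ × ℕ) (hp : p ∈ ladderPlus Λ),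
        ψ (algebraMap (MvPolynomial ↥(ladderPlus Λ) K) _ (MvPolynomial.X ⟨p, hp⟩)) =
          if p.1 ≠ v k ∧ p.2 ≠ w k ∧ p ∈ ladderPlus (ladderPrime Λ v w k) ∧
              p.1 ≤ v k - 1 ∧ p.2 ≤ w k - 1 then
            algebraMap (MvPolynomial ↥(ladderPlus Λ) K) _ (MvPolynomial.X ⟨p, hp⟩) -
              algebraMap (MvPolynomial ↥(ladderPlus Λ) K) _
                  (ladderEntry K Λ p.1 (w k) * ladderEntry K Λ (v k) p.2) *
                IsLocalization.Away.invSelf (ladderEntry K Λ (v k) (w k))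
          else
            algebraMap (MvPolynomial ↥(ladderPlus Λ) K) _ (MvPolynomial.X ⟨p, hp⟩)) ∧
      ψ.comp φ = AlgHom.id K _ ∧ φ.comp ψ = AlgHom.id K _ := by
  have hvw : v k = w k := hd.fst_eq_snd hΛ hk1 hks hwk
  have he : (v k, w k) ∈ ladderPlus Λ := (hd.2.1 k hk1 hks).1
  set e : ladderPlus Λ := ⟨(v k, w k), he⟩
  rw [ladderEntry_of_le he.2, xvar_of_mem he]
  set g : ladderPlus Λ → Localization.Away (X e : MvPolynomial _ K) := fun q =>
    if q.1.1 ≠ v k ∧ q.1.2 ≠ w k ∧ q.1.1 ≤ v k ∧ q.1.2 ≤ w k then shearTerm K e q else 0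
  have hg : ∀ q : ladderPlus Λ, w k ≤ q.1.2 → g q = 0 := fun q hq => if_neg (by omega)
  have hg' : ∀ q : ladderPlus Λ, w k ≤ q.1.2 → (-g) q = 0 := fun q hq => by
    rw [Pi.neg_apply, hg q hq, neg_zero]
  have hfix : ∀ g' hg', (∀ q : ladderPlus Λ, w k ≤ q.1.2 → g' q = 0) →
      ∀ q, awayTranslate e g' hg' (g q) = g q := fun g' hg' hg'w q => by
    simp only [g]
    split_ifs
    · exact awayTranslate_shearTerm hvw hg'w q
    · exact map_zero _
  refine ⟨awayTranslate e g (hg e le_rfl), awayTranslate e (-g) (hg' e le_rfl),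
    fun p hp => ?_, fun p hp => ?_, awayTranslate_comp_eq_id (fun q => add_neg_cancel _)
      (hfix _ _ hg'), awayTranslate_comp_eq_id (fun q => neg_add_cancel _) fun q => ?_⟩
  · rw [awayTranslate_algebraMap_X]
    simp only [g]
    split_ifs
    · rfl
    · exact add_zero _
  · rw [awayTranslate_algebraMap_X, Pi.neg_apply, sub_eq_add_neg]
    simp only [g, ← corner_cond_iff_ladderPrime_cond hp hvw]
    split_ifs
    · rfl
    · rw [neg_zero, add_zero]
  · rw [Pi.neg_apply, map_neg, hfix _ _ hg]

open scoped Classical in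
theorem statement4 {K : Type*} [Field K] [IsAlgClosed K] (n : ℕ) (hn : 1 ≤ n)
    (Λ : Set (ℕ × ℕ)) (hΛ : IsLadder n Λ)
    (s : ℕ) (v w t : ℕ → ℕ) (hd : DistinguishedPoints Λ s v w)
    (ht : ∀ l, 1 ≤ l → l ≤ s → 1 ≤ t l)
    (hv0 : v 0 = 0) (hws : w (s + 1) = 0)
    (k : ℕ) (hk1 : 1 ≤ k) (hks : k ≤ s)
    (htk : 2 ≤ t k) (hvk : v (k - 1) < v k) (hwk : w (k + 1) < w k) :
    ∃ (φ ψ : Localization.Away (ladderEntry K Λ (v k) (w k)) →ₐ[K]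
        Localization.Away (ladderEntry K Λ (v k) (w k))),
      (∀ (p : ℕ × ℕ) (hp : p ∈ ladderPlus Λ),
        φ (algebraMap (MvPolynomial ↥(ladderPlus Λ) K) _ (MvPolynomial.X ⟨p, hp⟩)) =
          if p.1 ≠ v k ∧ p.2 ≠ w k ∧ p.1 ≤ v k ∧ p.2 ≤ w k then
            algebraMap (MvPolynomial ↥(ladderPlus Λ) K) _ (MvPolynomial.X ⟨p, hp⟩) +
              algebraMap (MvPolynomial ↥(ladderPlus Λ) K) _
                  (ladderEntry K Λ p.1 (w k) * ladderEntry K Λ (v k) p.2) *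
                IsLocalization.Away.invSelf (ladderEntry K Λ (v k) (w k))
          else
            algebraMap (MvPolynomial ↥(ladderPlus Λ) K) _ (MvPolynomial.X ⟨p, hp⟩)) ∧
      (∀ (p : ℕ × ℕ) (hp : p ∈ ladderPlus Λ),
        ψ (algebraMap (MvPolynomial ↥(ladderPlus Λ) K) _ (MvPolynomial.X ⟨p, hp⟩)) =
          if p.1 ≠ v k ∧ p.2 ≠ w k ∧ p ∈ ladderPlus (ladderPrime Λ v w k) ∧
              p.1 ≤ v k - 1 ∧ p.2 ≤ w k - 1 then
            algebraMap (MvPolynomial ↥(ladderPlus Λ) K) _ (MvPolynomial.X ⟨p, hp⟩) -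
              algebraMap (MvPolynomial ↥(ladderPlus Λ) K) _
                  (ladderEntry K Λ p.1 (w k) * ladderEntry K Λ (v k) p.2) *
                IsLocalization.Away.invSelf (ladderEntry K Λ (v k) (w k))
          else
            algebraMap (MvPolynomial ↥(ladderPlus Λ) K) _ (MvPolynomial.X ⟨p, hp⟩)) ∧
      ψ.comp φ = AlgHom.id K _ ∧ φ.comp ψ = AlgHom.id K _ :=
  statement4_general n Λ hΛ s v w hd k hk1 hks hwk
end

section
/- Let 2 ≤ k ≤ s. If v_k − v_{k−1} ≤ t_k − t_{k−1}, then I_{t_k}(L_k) ⊆ I_{t_{k−1}}(L_{k−1}): every t_k×t_k minor of X with entries in L_k is a K[L]-linear combination of minors of size at least t_{k−1} with entries in L_{k−1} (obtained by Laplace expansion along the rows of index greater than v_{k−1}). -/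
open MvPolynomial

/-!
Laplace expansion along the last rows writes a `t_k`-minor as a combination of `t_{k-1}`-minors
that use its first `t_{k-1}` rows. If the minor has entries in `L_k`, then all its row indices
or (transposing, since `X` is symmetric) all its column indices are at most `v_k`; being
strictly increasing, the first `t_{k-1}` of them are at most `v_k - (t_k - t_{k-1}) ≤ v_{k-1}`,
so these smaller minors have entries in `L_{k-1}`.
-/

theorem Fin.apply_add_sub_le_of_strictMono {r : ℕ} {α : Fin r → ℕ} (hα : StrictMono α)
    {p q : Fin r} (hpq : p ≤ q) : α p + (q - p : ℕ) ≤ α q := by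
  have hcard : (Finset.Icc p q).card ≤ (Finset.Icc (α p) (α q)).card :=
    Finset.card_le_card_of_injOn α (fun x hx => by
      simp only [Finset.coe_Icc, Set.mem_Icc] at hx
      exact Finset.mem_Icc.2 ⟨hα.monotone hx.1, hα.monotone hx.2⟩) hα.injective.injOn
  have hmono := hα.monotone hpq
  rw [Fin.card_Icc, Nat.card_Icc] at hcard
  omega

noncomputable def ladderSubmatrix (K : Type*) [Field K] (Λ : Set (ℕ × ℕ)) {r : ℕ}
    (α β : Fin r → ℕ) : Matrix (Fin r) (Fin r) (MvPolynomial ↥(ladderPlus Λ) K) :=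
  Matrix.of fun p q => ladderEntry K Λ (α p) (β q)

section

variable {K : Type*} [Field K] {Λ : Set (ℕ × ℕ)}

theorem ladderEntry_comm (i j : ℕ) : ladderEntry K Λ i j = ladderEntry K Λ j i := by
  rw [ladderEntry, ladderEntry, min_comm, max_comm]

theorem ladderSubmatrix_transpose {r : ℕ} (α β : Fin r → ℕ) :
    (ladderSubmatrix K Λ α β).transpose = ladderSubmatrix K Λ β α :=
  Matrix.ext fun p q => ladderEntry_comm (α q) (β p)

theorem ladderSubmatrix_submatrix {r m : ℕ} (α β : Fin r → ℕ) (f g : Fin m → Fin r) :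
    (ladderSubmatrix K Λ α β).submatrix f g = ladderSubmatrix K Λ (α ∘ f) (β ∘ g) :=
  rfl

theorem det_ladderSubmatrix_mem_minorIdeal {S : Set (ℕ × ℕ)} {t : ℕ} {α β : Fin t → ℕ}
    (hα : StrictMono α) (hβ : StrictMono β)
    (hS : ∀ p q, (min (α p) (β q), max (α p) (β q)) ∈ S) :
    (ladderSubmatrix K Λ α β).det ∈ minorIdeal K Λ S t :=
  Ideal.subset_span ⟨α, β, hα, hβ, hS, rfl⟩

theorem det_ladderSubmatrix_mem_minorIdeal_region {c d t r : ℕ} (htr : t ≤ r)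
    {α β : Fin r → ℕ} (hα : StrictMono α) (hβ : StrictMono β)
    (hL : ∀ p q, (min (α p) (β q), max (α p) (β q)) ∈ ladderPlus Λ)
    (hd : ∀ p q, max (α p) (β q) ≤ d) (hc : ∀ p : Fin r, (p : ℕ) < t → α p ≤ c) :
    (ladderSubmatrix K Λ α β).det ∈ minorIdeal K Λ (region Λ c d) t := by
  induction r, htr using Nat.le_induction with
  | base =>
    exact det_ladderSubmatrix_mem_minorIdeal hα hβ fun p q =>
      ⟨hL p q, (min_le_left _ _).trans (hc p p.isLt), hd p q⟩
  | succ m _ ih =>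
    rw [Matrix.det_succ_row _ (Fin.last m)]
    refine Ideal.sum_mem _ fun j _ => Ideal.mul_mem_left _ _ ?_
    rw [ladderSubmatrix_submatrix]
    refine ih (hα.comp (Fin.strictMono_succAbove _)) (hβ.comp (Fin.strictMono_succAbove j))
      (fun p q => hL _ _) (fun p q => hd _ _) fun p hp => ?_
    simpa [Fin.succAbove_last] using hc p.castSucc hp

theorem det_ladderSubmatrix_mem_minorIdeal_region_of_le {c c' d t t' : ℕ} (htt : t' ≤ t)
    (hct : c' + t' ≤ c + t) {α β : Fin t → ℕ} (hα : StrictMono α) (hβ : StrictMono β)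
    (hL : ∀ p q, (min (α p) (β q), max (α p) (β q)) ∈ ladderPlus Λ)
    (hd : ∀ p q, max (α p) (β q) ≤ d) (hc' : ∀ p, α p ≤ c') :
    (ladderSubmatrix K Λ α β).det ∈ minorIdeal K Λ (region Λ c d) t' := by
  refine det_ladderSubmatrix_mem_minorIdeal_region htt hα hβ hL hd fun p hp => ?_
  have hpt := p.isLt
  have hgap := Fin.apply_add_sub_le_of_strictMono hα (p := p) (q := ⟨t - 1, by omega⟩)
    (Fin.le_def.2 (by dsimp only; omega))
  have hlast := hc' ⟨t - 1, by omega⟩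
  dsimp only at hgap
  omega

end

theorem statement6_general {K : Type*} [Field K]
    (Λ : Set (ℕ × ℕ))
    (s : ℕ) (v w t : ℕ → ℕ) (hd : DistinguishedPoints Λ s v w)
    (k : ℕ) (hk2 : 2 ≤ k) (hks : k ≤ s)
    (hvt : (v k : ℤ) - v (k - 1) ≤ (t k : ℤ) - t (k - 1)) :
    minorIdeal K Λ (region Λ (v k) (w k)) (t k) ≤
      minorIdeal K Λ (region Λ (v (k - 1)) (w (k - 1))) (t (k - 1)) := by
  obtain ⟨hv, hw⟩ := hd.2.2.2 (k - 1) k (by omega) (by omega) hks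
  have htt : t (k - 1) ≤ t k := by omega
  have hct : v k + t (k - 1) ≤ v (k - 1) + t k := by omega
  rw [minorIdeal, Ideal.span_le]
  rintro _ ⟨α, β, hα, hβ, hS, rfl⟩
  change (ladderSubmatrix K Λ α β).det ∈ _
  have hL p q := (hS p q).1
  have hdw p q : max (α p) (β q) ≤ w (k - 1) := (hS p q).2.2.trans hw
  by_cases hrows : ∀ p, α p ≤ v k
  · exact det_ladderSubmatrix_mem_minorIdeal_region_of_le htt hct hα hβ hL hdw hrows
  · obtain ⟨p₀, hp₀⟩ := not_forall.1 hrows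
    have hcols q : β q ≤ v k := by have := (hS p₀ q).2.1; omega
    rw [← Matrix.det_transpose, ladderSubmatrix_transpose]
    refine det_ladderSubmatrix_mem_minorIdeal_region_of_le htt hct hβ hα
      (fun q p => by simpa only [min_comm, max_comm] using hL p q)
      (fun q p => by simpa only [max_comm] using hdw p q) hcols

theorem statement6 {K : Type*} [Field K] [IsAlgClosed K] (n : ℕ) (hn : 1 ≤ n)
    (Λ : Set (ℕ × ℕ)) (hΛ : IsLadder n Λ)
    (s : ℕ) (v w t : ℕ → ℕ) (hd : DistinguishedPoints Λ s v w)
    (ht : ∀ l, 1 ≤ l → l ≤ s → 1 ≤ t l)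
    (k : ℕ) (hk2 : 2 ≤ k) (hks : k ≤ s)
    (hvt : (v k : ℤ) - v (k - 1) ≤ (t k : ℤ) - t (k - 1)) :
    minorIdeal K Λ (region Λ (v k) (w k)) (t k) ≤
      minorIdeal K Λ (region Λ (v (k - 1)) (w (k - 1))) (t (k - 1)) :=
  statement6_general Λ s v w t hd k hk2 hks hvt
end
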